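/- arXiv:1008.5319 — 5 statements merged into one kernel-verified Lean document; each statement's English description precedes it below -/
import Mathlib

section
/- (Lemma 1(i)) Let n ≥ 2 and let X₁, …, Xₙ be i.i.d. real random variables with mean μ, variance σ² > 0, and E X₁⁴ < ∞. Let X̄ = n⁻¹ Σᵢ Xᵢ and S² = (n−1)⁻¹ Σᵢ (Xᵢ − X̄)². Then the correlation coefficient satisfies ρ(X̄, S²) = μ₃ / (σ³ √(μ₄/σ⁴ − (n−3)/(n−1))) = γ / √(κ + 3 − (n−3)/(n−1)), where μ₃ = E(X₁ − μ)³, μ₄ = E(X₁ − μ)⁴, γ = μ₃/σ³ is the skewness, and κ = μ₄/σ⁴ − 3 is the excess kurtosis. -/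
open MeasureTheory ProbabilityTheory

/-- The covariance of two real-valued random variables. -/
noncomputable def cov {Ω : Type*} [MeasurableSpace Ω] (P : Measure Ω) (f g : Ω → ℝ) : ℝ :=
  ∫ ω, (f ω - ∫ x, f x ∂P) * (g ω - ∫ x, g x ∂P) ∂P

/-- The correlation coefficient of two real-valued random variables. -/
noncomputable def corr {Ω : Type*} [MeasurableSpace Ω] (P : Measure Ω) (f g : Ω → ℝ) : ℝ :=
  cov P f g / Real.sqrt (variance f P * variance g P)

/-!
Centre the sample, `Yᵢ = Xᵢ - μ`. Then `X̄ - μ = n⁻¹ ∑ Yᵢ` and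
`S² = n⁻¹ ∑ Yᵢ² - (n (n - 1))⁻¹ ∑_{i ≠ j} Yᵢ Yⱼ`, so by bilinearity the covariance and the two
variances reduce to covariances between the variables `Yᵢ`, `Yᵢ²` and `Yᵢ Yⱼ` (`i ≠ j`).
By independence the mean of a monomial in the `Yᵢ` is the product of the moments of the single
factors, so it vanishes as soon as some index occurs exactly once. The surviving terms give
`Cov(X̄, S²) = μ₃ / n`, `Var X̄ = σ² / n` and `Var S² = (μ₄ - (n - 3) / (n - 1) σ⁴) / n`.
-/

open Finset

theorem Finset.sq_sum_eq_sum_sq_add_sum_offDiag {ι R : Type*} [CommSemiring R] [DecidableEq ι]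
    (s : Finset ι) (f : ι → R) :
    (∑ i ∈ s, f i) ^ 2 = ∑ i ∈ s, f i ^ 2 + ∑ p ∈ s.offDiag, f p.1 * f p.2 := by
  rw [sq, sum_mul_sum, ← sum_product', ← diag_union_offDiag,
    sum_union (disjoint_diag_offDiag s), sum_diag]
  simp only [sq]

section SampleStatistics

variable {ι : Type*} [Fintype ι]

noncomputable def sampleMean (x : ι → ℝ) : ℝ := (Fintype.card ι : ℝ)⁻¹ * ∑ i, x i

noncomputable def sampleVariance (x : ι → ℝ) : ℝ :=
  ((Fintype.card ι : ℝ) - 1)⁻¹ * ∑ i, (x i - sampleMean x) ^ 2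

theorem sampleMean_add_const [Nonempty ι] (x : ι → ℝ) (c : ℝ) :
    sampleMean (fun i => x i + c) = sampleMean x + c := by
  have : (Fintype.card ι : ℝ) ≠ 0 := Nat.cast_ne_zero.2 Fintype.card_ne_zero
  simp only [sampleMean, sum_add_distrib, sum_const, card_univ, nsmul_eq_mul]
  field_simp

theorem sampleVariance_add_const [Nonempty ι] (x : ι → ℝ) (c : ℝ) :
    sampleVariance (fun i => x i + c) = sampleVariance x := by
  simp only [sampleVariance, sampleMean_add_const, add_sub_add_right_eq_sub]

theorem sampleVariance_eq_sub_sum_offDiag [DecidableEq ι] (hn : 2 ≤ Fintype.card ι)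
    (x : ι → ℝ) :
    sampleVariance x = (Fintype.card ι : ℝ)⁻¹ * ∑ i, x i ^ 2
      - ((Fintype.card ι : ℝ) * (Fintype.card ι - 1))⁻¹ * ∑ p ∈ univ.offDiag, x p.1 * x p.2 := by
  have hn' : (2 : ℝ) ≤ Fintype.card ι := by exact_mod_cast hn
  have h0 : (Fintype.card ι : ℝ) ≠ 0 := by positivity
  have h1 : (Fintype.card ι : ℝ) - 1 ≠ 0 := by linarith
  have hsum : ∑ i, (x i - sampleMean x) ^ 2 = ∑ i, x i ^ 2 - (∑ i, x i) ^ 2 / Fintype.card ι := by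
    simp only [sampleMean, sub_sq, sum_add_distrib, sum_sub_distrib, ← sum_mul, ← mul_sum,
      sum_const, card_univ, nsmul_eq_mul]
    field_simp
    ring
  rw [sampleVariance, hsum, sq_sum_eq_sum_sq_add_sum_offDiag]
  field_simp
  ring

end SampleStatistics

namespace MeasureTheory

variable {Ω : Type*} [MeasurableSpace Ω] {P : Measure Ω} {f g : Ω → ℝ}

theorem memLp_two_sq_of_integrable_pow_four (hf : AEStronglyMeasurable f P)
    (h : Integrable (fun ω => f ω ^ 4) P) : MemLp (fun ω => f ω ^ 2) 2 P :=
  (memLp_two_iff_integrable_sq (f := fun ω => f ω ^ 2) (hf.pow 2)).2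
    (by simpa only [← pow_mul] using h)

theorem MemLp.of_sq [IsFiniteMeasure P] (hf : AEStronglyMeasurable f P)
    (h : MemLp (fun ω => f ω ^ 2) 2 P) : MemLp f 2 P :=
  (memLp_two_iff_integrable_sq hf).2 (h.integrable one_le_two)

theorem MemLp.mul_of_sq (hf : AEStronglyMeasurable f P) (hg : AEStronglyMeasurable g P)
    (hf2 : MemLp (fun ω => f ω ^ 2) 2 P) (hg2 : MemLp (fun ω => g ω ^ 2) 2 P) :
    MemLp (fun ω => f ω * g ω) 2 P :=
  (memLp_two_iff_integrable_sq (f := fun ω => f ω * g ω) (hf.mul hg)).2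
    (by simp only [mul_pow]; exact hf2.integrable_mul hg2)

theorem MemLp.sq_sub_const [IsFiniteMeasure P] (hf : AEStronglyMeasurable f P)
    (h : MemLp (fun ω => f ω ^ 2) 2 P) (c : ℝ) : MemLp (fun ω => (f ω - c) ^ 2) 2 P := by
  convert (h.sub ((MemLp.of_sq hf h).const_mul (2 * c))).add (memLp_const (c ^ 2)) using 1
  funext ω
  simp only [Pi.add_apply, Pi.sub_apply]
  ring

end MeasureTheory

section Correlation

variable {Ω : Type*} [MeasurableSpace Ω] {P : Measure Ω}

theorem cov_eq_covariance (f g : Ω → ℝ) : cov P f g = covariance f g P := rfl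

theorem corr_add_const_left [IsProbabilityMeasure P] {f : Ω → ℝ} (hf : Integrable f P) (c : ℝ)
    (g : Ω → ℝ) : corr P (fun ω => f ω + c) g = corr P f g := by
  rw [corr, corr, cov_eq_covariance, cov_eq_covariance, covariance_add_const_left hf,
    variance_add_const hf.aestronglyMeasurable]

end Correlation

namespace ProbabilityTheory.iIndepFun

variable {Ω ι : Type*} [MeasurableSpace Ω] {P : Measure Ω} {Y : ι → Ω → ℝ}

theorem integral_sq_mul_sq (hY : iIndepFun Y P) (hmeas : ∀ i, Measurable (Y i)) {a b : ι}
    (hab : a ≠ b) :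
    ∫ ω, Y a ω ^ 2 * Y b ω ^ 2 ∂P = (∫ ω, Y a ω ^ 2 ∂P) * ∫ ω, Y b ω ^ 2 ∂P :=
  (hY.indepFun hab).integral_fun_comp_mul_comp (f := fun x => x ^ 2) (g := fun x => x ^ 2)
    (hmeas a).aemeasurable (hmeas b).aemeasurable (measurable_id.pow_const 2).aestronglyMeasurable
    (measurable_id.pow_const 2).aestronglyMeasurable

variable [DecidableEq ι]

theorem integral_multiset_prod_map [Fintype ι] (hY : iIndepFun Y P) (hmeas : ∀ i, Measurable (Y i))
    (S : Multiset ι) : ∫ ω, (S.map (Y · ω)).prod ∂P = ∏ i, ∫ ω, Y i ω ^ S.count i ∂P := by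
  have hprod : ∀ ω, (S.map (Y · ω)).prod = ∏ i, Y i ω ^ S.count i := fun ω => by
    rw [prod_multiset_map_count]
    exact prod_subset (subset_univ _) fun i _ hi => by
      rw [Multiset.count_eq_zero_of_notMem (by simpa using hi), pow_zero]
  simp_rw [hprod]
  exact hY.integral_fun_prod_comp (f := fun i x => x ^ S.count i)
    (fun i => (hmeas i).aemeasurable) fun i => (measurable_id.pow_const _).aestronglyMeasurable

theorem integral_multiset_prod_map_eq_zero [Fintype ι] (hY : iIndepFun Y P)
    (hmeas : ∀ i, Measurable (Y i)) {S : Multiset ι} {a : ι} (ha : S.count a = 1)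
    (h0 : ∫ ω, Y a ω ∂P = 0) :
    ∫ ω, (S.map (Y · ω)).prod ∂P = 0 := by
  rw [hY.integral_multiset_prod_map hmeas]
  exact prod_eq_zero (mem_univ a) (by simpa [ha] using h0)

theorem integral_pow_mul_mul_eq_zero [Fintype ι] (hY : iIndepFun Y P)
    (hmeas : ∀ i, Measurable (Y i)) (h0 : ∀ i, ∫ ω, Y i ω ∂P = 0) (k : ℕ) (i : ι) {a b : ι}
    (hab : a ≠ b) :
    ∫ ω, Y i ω ^ k * (Y a ω * Y b ω) ∂P = 0 := by
  have hS : ∀ ω, Y i ω ^ k * (Y a ω * Y b ω)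
      = ((Multiset.replicate k i + {a, b}).map (Y · ω)).prod := fun ω => by
    simp only [Multiset.map_add, Multiset.map_replicate, Multiset.prod_add,
      Multiset.prod_replicate, Multiset.insert_eq_cons, Multiset.map_cons, Multiset.prod_cons,
      Multiset.map_singleton, Multiset.prod_singleton]
  simp_rw [hS]
  by_cases hia : i = a
  · subst hia
    exact hY.integral_multiset_prod_map_eq_zero hmeas (a := b)
      (by simp [Multiset.count_replicate, hab, Ne.symm hab]) (h0 b)
  · exact hY.integral_multiset_prod_map_eq_zero hmeas (a := a)
      (by simp [Multiset.count_replicate, hab, hia]) (h0 a)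

theorem integral_mul_mul_eq_zero [Fintype ι] (hY : iIndepFun Y P)
    (hmeas : ∀ i, Measurable (Y i)) (h0 : ∀ i, ∫ ω, Y i ω ∂P = 0) {p q : ι × ι}
    (hq : q.1 ≠ q.2) (hqp : q ≠ p) (hqp' : q ≠ p.swap) :
    ∫ ω, Y p.1 ω * Y p.2 ω * (Y q.1 ω * Y q.2 ω) ∂P = 0 := by
  have hS : ∀ ω, Y p.1 ω * Y p.2 ω * (Y q.1 ω * Y q.2 ω)
      = (({p.1, p.2, q.1, q.2} : Multiset ι).map (Y · ω)).prod := fun ω => by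
    simp [mul_assoc]
  simp_rw [hS]
  obtain ⟨p1, p2⟩ := p
  obtain ⟨q1, q2⟩ := q
  simp only [ne_eq, Prod.mk.injEq, Prod.swap_prod_mk, not_and] at hq hqp hqp' ⊢
  by_cases hq1 : q1 = p1 ∨ q1 = p2
  · have hq2 : q2 ≠ p1 ∧ q2 ≠ p2 := by grind
    exact hY.integral_multiset_prod_map_eq_zero hmeas (a := q2)
      (by simp [hq2.1, hq2.2, hq, Ne.symm hq]) (h0 q2)
  · rw [not_or] at hq1
    exact hY.integral_multiset_prod_map_eq_zero hmeas (a := q1) (by simp [hq1.1, hq1.2, hq])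
      (h0 q1)

variable [IsProbabilityMeasure P]

theorem covariance_sq_right (hY : iIndepFun Y P) (hmeas : ∀ i, Measurable (Y i))
    (hY2 : ∀ i, MemLp (fun ω => Y i ω ^ 2) 2 P) (h0 : ∀ i, ∫ ω, Y i ω ∂P = 0) (i j : ι) :
    cov[Y i, fun ω => Y j ω ^ 2; P] = if i = j then ∫ ω, Y i ω ^ 3 ∂P else 0 := by
  have hY1 : MemLp (Y i) 2 P := MemLp.of_sq (hmeas i).aestronglyMeasurable (hY2 i)
  split_ifs with hij
  · subst hij
    rw [covariance_eq_sub hY1 (hY2 i), h0, zero_mul, sub_zero]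
    exact integral_congr_ae (ae_of_all _ fun ω => by simp only [Pi.mul_apply]; ring)
  · exact ((hY.indepFun hij).comp measurable_id (measurable_id.pow_const 2)).covariance_eq_zero
      hY1 (hY2 j)

theorem covariance_mul_right_eq_zero [Fintype ι] (hY : iIndepFun Y P)
    (hmeas : ∀ i, Measurable (Y i)) (hY2 : ∀ i, MemLp (fun ω => Y i ω ^ 2) 2 P)
    (h0 : ∀ i, ∫ ω, Y i ω ∂P = 0) (i : ι) {a b : ι} (hab : a ≠ b) :
    cov[Y i, fun ω => Y a ω * Y b ω; P] = 0 := by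
  rw [covariance_eq_sub (MemLp.of_sq (hmeas i).aestronglyMeasurable (hY2 i))
    (MemLp.mul_of_sq (hmeas a).aestronglyMeasurable (hmeas b).aestronglyMeasurable (hY2 a) (hY2 b)),
    h0, zero_mul, sub_zero]
  simpa using hY.integral_pow_mul_mul_eq_zero hmeas h0 1 i hab

theorem covariance_sq_sq (hY : iIndepFun Y P) (hY2 : ∀ i, MemLp (fun ω => Y i ω ^ 2) 2 P)
    (i j : ι) :
    cov[fun ω => Y i ω ^ 2, fun ω => Y j ω ^ 2; P]
      = if i = j then ∫ ω, Y i ω ^ 4 ∂P - (∫ ω, Y i ω ^ 2 ∂P) ^ 2 else 0 := by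
  split_ifs with hij
  · subst hij
    rw [covariance_eq_sub (hY2 i) (hY2 i), sq (∫ ω, Y i ω ^ 2 ∂P)]
    congr 1
    exact integral_congr_ae (ae_of_all _ fun ω => by simp only [Pi.mul_apply]; ring)
  · exact ((hY.indepFun hij).comp (measurable_id.pow_const 2)
      (measurable_id.pow_const 2)).covariance_eq_zero (hY2 i) (hY2 j)

theorem covariance_sq_mul_eq_zero [Fintype ι] (hY : iIndepFun Y P) (hmeas : ∀ i, Measurable (Y i))
    (hY2 : ∀ i, MemLp (fun ω => Y i ω ^ 2) 2 P) (h0 : ∀ i, ∫ ω, Y i ω ∂P = 0) (i : ι)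
    {a b : ι} (hab : a ≠ b) : cov[fun ω => Y i ω ^ 2, fun ω => Y a ω * Y b ω; P] = 0 := by
  rw [covariance_eq_sub (hY2 i)
    (MemLp.mul_of_sq (hmeas a).aestronglyMeasurable (hmeas b).aestronglyMeasurable (hY2 a) (hY2 b))]
  have hab0 := hY.integral_pow_mul_mul_eq_zero hmeas h0 0 i hab
  simp only [pow_zero, one_mul] at hab0
  simp only [Pi.mul_apply, hY.integral_pow_mul_mul_eq_zero hmeas h0 2 i hab, hab0, mul_zero,
    sub_zero]

theorem covariance_mul_mul [Fintype ι] (hY : iIndepFun Y P) (hmeas : ∀ i, Measurable (Y i))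
    (hY2 : ∀ i, MemLp (fun ω => Y i ω ^ 2) 2 P) (h0 : ∀ i, ∫ ω, Y i ω ∂P = 0)
    {p q : ι × ι} (hp : p.1 ≠ p.2) (hq : q.1 ≠ q.2) :
    cov[fun ω => Y p.1 ω * Y p.2 ω, fun ω => Y q.1 ω * Y q.2 ω; P]
      = (if q = p then (∫ ω, Y p.1 ω ^ 2 ∂P) * ∫ ω, Y p.2 ω ^ 2 ∂P else 0)
        + if q = p.swap then (∫ ω, Y p.1 ω ^ 2 ∂P) * ∫ ω, Y p.2 ω ^ 2 ∂P else 0 := by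
  have hW : ∀ a b, MemLp (fun ω => Y a ω * Y b ω) 2 P := fun a b =>
    MemLp.mul_of_sq (hmeas a).aestronglyMeasurable (hmeas b).aestronglyMeasurable (hY2 a) (hY2 b)
  have hW0 : ∀ a b, a ≠ b → ∫ ω, Y a ω * Y b ω ∂P = 0 := fun a b hab => by
    simpa using hY.integral_pow_mul_mul_eq_zero hmeas h0 0 a hab
  rw [covariance_eq_sub (hW _ _) (hW _ _), hW0 _ _ hp, zero_mul, sub_zero]
  simp only [Pi.mul_apply]
  by_cases hqp : q = p
  · subst hqp
    rw [if_pos rfl, if_neg (fun h => hq (congrArg Prod.fst h)), add_zero,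
      ← hY.integral_sq_mul_sq hmeas hq]
    exact integral_congr_ae (ae_of_all _ fun ω => by ring)
  by_cases hqp' : q = p.swap
  · subst hqp'
    rw [if_neg hqp, if_pos rfl, zero_add, ← hY.integral_sq_mul_sq hmeas hp]
    exact integral_congr_ae (ae_of_all _ fun ω => by simp only [Prod.fst_swap, Prod.snd_swap]; ring)
  rw [if_neg hqp, if_neg hqp', add_zero]
  exact hY.integral_mul_mul_eq_zero hmeas h0 hq hqp hqp'

end ProbabilityTheory.iIndepFun

section SampleMoments

variable {Ω ι : Type*} [MeasurableSpace Ω] {P : Measure Ω} [Fintype ι]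

theorem memLp_sampleMean {p : ENNReal} {X : ι → Ω → ℝ} (hX : ∀ i, MemLp (X i) p P) :
    MemLp (fun ω => sampleMean (X · ω)) p P :=
  (memLp_finsetSum _ fun i _ => hX i).const_mul _

theorem variance_sampleMean [IsFiniteMeasure P] {X : ι → Ω → ℝ}
    (hX : Pairwise fun i j => IndepFun (X i) (X j) P) (hX2 : ∀ i, MemLp (X i) 2 P) {s2 : ℝ}
    (hvar : ∀ i, Var[X i; P] = s2) :
    Var[fun ω => sampleMean (X · ω); P] = s2 / Fintype.card ι := by
  have hsum : (fun ω => ∑ i, X i ω) = ∑ i, X i := by ext; simp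
  simp only [sampleMean]
  rw [variance_const_mul, hsum, IndepFun.variance_sum (fun i _ => hX2 i) fun i _ j _ hij => hX hij]
  simp only [hvar, sum_const, card_univ, nsmul_eq_mul]
  field_simp

variable [IsProbabilityMeasure P] {Y : ι → Ω → ℝ}

theorem covariance_sampleMean_sampleVariance (hn : 2 ≤ Fintype.card ι) (hY : iIndepFun Y P)
    (hmeas : ∀ i, Measurable (Y i)) (hY2 : ∀ i, MemLp (fun ω => Y i ω ^ 2) 2 P)
    (h0 : ∀ i, ∫ ω, Y i ω ∂P = 0) {m3 : ℝ} (h3 : ∀ i, ∫ ω, Y i ω ^ 3 ∂P = m3) :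
    cov[fun ω => sampleMean (Y · ω), fun ω => sampleVariance (Y · ω); P]
      = m3 / Fintype.card ι := by
  classical
  have hY1 : ∀ i, MemLp (Y i) 2 P := fun i => MemLp.of_sq (hmeas i).aestronglyMeasurable (hY2 i)
  have hW : ∀ p : ι × ι, MemLp (fun ω => Y p.1 ω * Y p.2 ω) 2 P := fun p =>
    MemLp.mul_of_sq (hmeas _).aestronglyMeasurable (hmeas _).aestronglyMeasurable (hY2 _) (hY2 _)
  simp only [sampleMean, sampleVariance_eq_sub_sum_offDiag hn]
  rw [covariance_const_mul_left, covariance_fun_sub_right (memLp_finsetSum _ fun i _ => hY1 i)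
    ((memLp_finsetSum _ fun i _ => hY2 i).const_mul _)
    ((memLp_finsetSum _ fun p _ => hW p).const_mul _), covariance_const_mul_right,
    covariance_const_mul_right, covariance_fun_sum_fun_sum hY1 hY2,
    covariance_fun_sum_fun_sum' (fun i _ => hY1 i) fun p _ => hW p]
  rw [sum_congr rfl fun i _ => sum_eq_zero fun p hp =>
    hY.covariance_mul_right_eq_zero hmeas hY2 h0 i (mem_offDiag.1 hp).2.2]
  simp only [hY.covariance_sq_right hmeas hY2 h0, h3, sum_ite_eq, mem_univ, if_true, sum_const,
    card_univ, nsmul_eq_mul, mul_zero, sub_zero]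
  field_simp

theorem variance_sampleVariance (hn : 2 ≤ Fintype.card ι) (hY : iIndepFun Y P)
    (hmeas : ∀ i, Measurable (Y i)) (hY2 : ∀ i, MemLp (fun ω => Y i ω ^ 2) 2 P)
    (h0 : ∀ i, ∫ ω, Y i ω ∂P = 0) {s2 m4 : ℝ} (h2 : ∀ i, ∫ ω, Y i ω ^ 2 ∂P = s2)
    (h4 : ∀ i, ∫ ω, Y i ω ^ 4 ∂P = m4) :
    Var[fun ω => sampleVariance (Y · ω); P]
      = (m4 - ((Fintype.card ι : ℝ) - 3) / ((Fintype.card ι : ℝ) - 1) * s2 ^ 2)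
        / Fintype.card ι := by
  classical
  set n : ℝ := (Fintype.card ι : ℝ) with hn_def
  have hn1 : n - 1 ≠ 0 := by
    have : (2 : ℝ) ≤ n := by rw [hn_def]; exact_mod_cast hn
    linarith
  have hW : ∀ p : ι × ι, MemLp (fun ω => Y p.1 ω * Y p.2 ω) 2 P := fun p =>
    MemLp.mul_of_sq (hmeas _).aestronglyMeasurable (hmeas _).aestronglyMeasurable (hY2 _) (hY2 _)
  have hoff : (#(univ : Finset ι).offDiag : ℝ) = n * (n - 1) := by
    rw [offDiag_card, Nat.cast_sub (Nat.le_mul_self _), card_univ]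
    push_cast
    ring
  have hWW : ∀ p ∈ (univ : Finset ι).offDiag,
      ∑ q ∈ univ.offDiag, cov[fun ω => Y p.1 ω * Y p.2 ω, fun ω => Y q.1 ω * Y q.2 ω; P]
        = 2 * s2 ^ 2 := fun p hp => by
    have hp' : p.1 ≠ p.2 := (mem_offDiag.1 hp).2.2
    have hswap : p.swap ∈ (univ : Finset ι).offDiag := by simpa using hp'.symm
    rw [sum_congr rfl fun q hq => hY.covariance_mul_mul hmeas hY2 h0 hp' (mem_offDiag.1 hq).2.2,
      sum_add_distrib, sum_ite_eq', sum_ite_eq', if_pos hp, if_pos hswap, h2, h2]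
    ring
  simp only [sampleVariance_eq_sub_sum_offDiag hn]
  rw [variance_fun_sub ((memLp_finsetSum _ fun i _ => hY2 i).const_mul _)
      ((memLp_finsetSum _ fun p _ => hW p).const_mul _),
    variance_const_mul, variance_const_mul, variance_fun_sum hY2,
    variance_fun_sum' fun p _ => hW p, covariance_const_mul_left, covariance_const_mul_right,
    covariance_fun_sum_fun_sum' (fun i _ => hY2 i) fun p _ => hW p, sum_congr rfl hWW,
    sum_congr rfl fun i _ => sum_eq_zero fun p hp =>
      hY.covariance_sq_mul_eq_zero hmeas hY2 h0 i (mem_offDiag.1 hp).2.2]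
  simp only [hY.covariance_sq_sq hY2, h2, h4, sum_ite_eq, mem_univ, if_true, sum_const, card_univ,
    nsmul_eq_mul, mul_zero, sub_zero, hoff, ← hn_def]
  field_simp
  ring

theorem corr_sampleMean_sampleVariance_of_integral_eq_zero (hn : 2 ≤ Fintype.card ι)
    (hY : iIndepFun Y P) (hmeas : ∀ i, Measurable (Y i)) (hY2 : ∀ i, MemLp (fun ω => Y i ω ^ 2) 2 P)
    (h0 : ∀ i, ∫ ω, Y i ω ∂P = 0) {σ m3 m4 : ℝ} (hσ : 0 < σ) (h2 : ∀ i, ∫ ω, Y i ω ^ 2 ∂P = σ ^ 2)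
    (h3 : ∀ i, ∫ ω, Y i ω ^ 3 ∂P = m3) (h4 : ∀ i, ∫ ω, Y i ω ^ 4 ∂P = m4) :
    corr P (fun ω => sampleMean (Y · ω)) (fun ω => sampleVariance (Y · ω))
      = m3 / (σ ^ 3 * √(m4 / σ ^ 4
          - ((Fintype.card ι : ℝ) - 3) / ((Fintype.card ι : ℝ) - 1))) := by
  have hY1 : ∀ i, MemLp (Y i) 2 P := fun i => (hY2 i).of_sq (hmeas i).aestronglyMeasurable
  have hvar : ∀ i, Var[Y i; P] = σ ^ 2 := fun i => by
    rw [variance_of_integral_eq_zero (hmeas i).aemeasurable (h0 i), h2]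
  rw [corr, cov_eq_covariance, covariance_sampleMean_sampleVariance hn hY hmeas hY2 h0 h3,
    variance_sampleMean (fun i j hij => hY.indepFun hij) hY1 hvar,
    variance_sampleVariance hn hY hmeas hY2 h0 h2 h4]
  set n : ℝ := (Fintype.card ι : ℝ) with hn_def
  have hn0 : 0 < n := by rw [hn_def]; exact_mod_cast (by omega : 0 < Fintype.card ι)
  have hrad : σ ^ 2 / n * ((m4 - (n - 3) / (n - 1) * (σ ^ 2) ^ 2) / n)
      = (σ ^ 3 / n) ^ 2 * (m4 / σ ^ 4 - (n - 3) / (n - 1)) := by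
    field_simp
  rw [hrad, Real.sqrt_mul (by positivity), Real.sqrt_sq (by positivity)]
  by_cases hD : √(m4 / σ ^ 4 - (n - 3) / (n - 1)) = 0
  · simp [hD]
  · field_simp

variable {X : ι → Ω → ℝ}

theorem corr_sampleMean_sampleVariance_eq (hn : 2 ≤ Fintype.card ι) (hX : iIndepFun X P)
    (hmeas : ∀ i, Measurable (X i)) (hX4 : ∀ i, Integrable (fun ω => X i ω ^ 4) P)
    {μ σ m3 m4 : ℝ} (hmean : ∀ i, ∫ ω, X i ω ∂P = μ) (hσ : 0 < σ)
    (hvar : ∀ i, Var[X i; P] = σ ^ 2) (h3 : ∀ i, ∫ ω, (X i ω - μ) ^ 3 ∂P = m3)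
    (h4 : ∀ i, ∫ ω, (X i ω - μ) ^ 4 ∂P = m4) :
    corr P (fun ω => sampleMean (X · ω)) (fun ω => sampleVariance (X · ω))
      = m3 / (σ ^ 3 * √(m4 / σ ^ 4
          - ((Fintype.card ι : ℝ) - 3) / ((Fintype.card ι : ℝ) - 1))) := by
  have : Nonempty ι := Fintype.card_pos_iff.1 (by omega)
  set Y : ι → Ω → ℝ := fun i ω => X i ω - μ
  have hYmeas : ∀ i, Measurable (Y i) := fun i => (hmeas i).sub_const μ
  have hX2 : ∀ i, MemLp (fun ω => X i ω ^ 2) 2 P := fun i =>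
    memLp_two_sq_of_integrable_pow_four (hmeas i).aestronglyMeasurable (hX4 i)
  have hY2 : ∀ i, MemLp (fun ω => Y i ω ^ 2) 2 P := fun i =>
    (hX2 i).sq_sub_const (hmeas i).aestronglyMeasurable μ
  have hY0 : ∀ i, ∫ ω, Y i ω ∂P = 0 := fun i => by
    rw [integral_sub (((hX2 i).of_sq (hmeas i).aestronglyMeasurable).integrable one_le_two)
      (integrable_const μ), hmean i, integral_const, probReal_univ, one_smul, sub_self]
  have hYsq : ∀ i, ∫ ω, Y i ω ^ 2 ∂P = σ ^ 2 := fun i => by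
    rw [← hvar i, variance_eq_integral (hmeas i).aemeasurable, hmean]
  have hY1 : ∀ i, MemLp (Y i) 2 P := fun i => (hY2 i).of_sq (hYmeas i).aestronglyMeasurable
  have hYind : iIndepFun Y P := hX.comp (fun _ x => x - μ) fun _ => measurable_id.sub_const μ
  have hX_eq : X = fun i ω => Y i ω + μ := by simp [Y]
  rw [hX_eq]
  simp only [sampleMean_add_const, sampleVariance_add_const]
  rw [corr_add_const_left ((memLp_sampleMean hY1).integrable one_le_two)]
  exact corr_sampleMean_sampleVariance_of_integral_eq_zero hn hYind hYmeas hY2 hY0 hσ hYsq h3 h4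

end SampleMoments

theorem corr_sampleMean_sampleVariance_general
    {Ω : Type*} [MeasureSpace Ω]
    (n : ℕ) (hn : 2 ≤ n) (X : Fin n → Ω → ℝ) (μ σ μ3 μ4 γ κ : ℝ)
    (hmeas : ∀ i, Measurable (X i))
    (hindep : iIndepFun X ℙ)
    (hmom : ∀ i, Integrable (fun ω => (X i ω) ^ 4) ℙ)
    (hmean : ∀ i, 𝔼[X i] = μ)
    (hσ : 0 < σ) (hvar : ∀ i, variance (X i) ℙ = σ ^ 2)
    (hμ3 : ∀ i, (∫ ω, (X i ω - μ) ^ 3 ∂ℙ) = μ3)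
    (hμ4 : ∀ i, (∫ ω, (X i ω - μ) ^ 4 ∂ℙ) = μ4)
    (hγ : γ = μ3 / σ ^ 3) (hκ : κ = μ4 / σ ^ 4 - 3) :
    corr ℙ (fun ω => (n : ℝ)⁻¹ * ∑ i, X i ω)
        (fun ω => ((n : ℝ) - 1)⁻¹ * ∑ i, (X i ω - (n : ℝ)⁻¹ * ∑ j, X j ω) ^ 2)
        = μ3 / (σ ^ 3 * Real.sqrt (μ4 / σ ^ 4 - ((n : ℝ) - 3) / ((n : ℝ) - 1)))
      ∧ corr ℙ (fun ω => (n : ℝ)⁻¹ * ∑ i, X i ω)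
        (fun ω => ((n : ℝ) - 1)⁻¹ * ∑ i, (X i ω - (n : ℝ)⁻¹ * ∑ j, X j ω) ^ 2)
        = γ / Real.sqrt (κ + 3 - ((n : ℝ) - 3) / ((n : ℝ) - 1)) := by
  have := hindep.isProbabilityMeasure
  have hcorr := corr_sampleMean_sampleVariance_eq (by simpa using hn) hindep hmeas hmom hmean hσ
    hvar hμ3 hμ4
  simp only [sampleMean, sampleVariance, Fintype.card_fin] at hcorr
  refine ⟨hcorr, ?_⟩
  rw [hcorr, hγ, hκ, div_div, sub_add_cancel]

/-- Lemma 1(i): if `X₁, …, Xₙ` (with `n ≥ 2`) are i.i.d. with mean `μ`, variance `σ² > 0`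
and `E X₁⁴ < ∞`, then the correlation coefficient of the sample mean `X̄` and the unbiased
sample variance `S²` equals `μ₃ / (σ³ √(μ₄/σ⁴ - (n-3)/(n-1))) = γ / √(κ + 3 - (n-3)/(n-1))`,
where `γ = μ₃/σ³` is the skewness and `κ = μ₄/σ⁴ - 3` is the excess kurtosis. -/
theorem corr_sampleMean_sampleVariance
    {Ω : Type*} [MeasureSpace Ω] [IsProbabilityMeasure (ℙ : Measure Ω)]
    (n : ℕ) (hn : 2 ≤ n) (X : Fin n → Ω → ℝ) (μ σ μ3 μ4 γ κ : ℝ)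
    (hmeas : ∀ i, Measurable (X i))
    (hindep : iIndepFun X ℙ)
    (hident : ∀ i j, IdentDistrib (X i) (X j) ℙ ℙ)
    (hmom : ∀ i, Integrable (fun ω => (X i ω) ^ 4) ℙ)
    (hmean : ∀ i, 𝔼[X i] = μ)
    (hσ : 0 < σ) (hvar : ∀ i, variance (X i) ℙ = σ ^ 2)
    (hμ3 : ∀ i, (∫ ω, (X i ω - μ) ^ 3 ∂ℙ) = μ3)
    (hμ4 : ∀ i, (∫ ω, (X i ω - μ) ^ 4 ∂ℙ) = μ4)
    (hγ : γ = μ3 / σ ^ 3) (hκ : κ = μ4 / σ ^ 4 - 3) :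
    corr ℙ (fun ω => (n : ℝ)⁻¹ * ∑ i, X i ω)
        (fun ω => ((n : ℝ) - 1)⁻¹ * ∑ i, (X i ω - (n : ℝ)⁻¹ * ∑ j, X j ω) ^ 2)
        = μ3 / (σ ^ 3 * Real.sqrt (μ4 / σ ^ 4 - ((n : ℝ) - 3) / ((n : ℝ) - 1)))
      ∧ corr ℙ (fun ω => (n : ℝ)⁻¹ * ∑ i, X i ω)
        (fun ω => ((n : ℝ) - 1)⁻¹ * ∑ i, (X i ω - (n : ℝ)⁻¹ * ∑ j, X j ω) ^ 2)
        = γ / Real.sqrt (κ + 3 - ((n : ℝ) - 3) / ((n : ℝ) - 1)) :=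
  corr_sampleMean_sampleVariance_general n hn X μ σ μ3 μ4 γ κ hmeas hindep hmom hmean hσ hvar hμ3
    hμ4 hγ hκ
end

section
/- Let n ≥ 3 and let X₁, …, Xₙ be i.i.d. real random variables with mean μ, variance σ² > 0, and E X₁⁴ < ∞. Let X̄ = n⁻¹ Σᵢ Xᵢ and μ̂₃ = n/((n−1)(n−2)) Σᵢ (Xᵢ − X̄)³. Then Cov(X̄, μ̂₃) = (μ₄ − 3σ⁴)/n, where μ₄ = E(X₁ − μ)⁴. -/
open MeasureTheory ProbabilityTheory

/-!
Centre the variables: with `Yᵢ = Xᵢ - μ` and `S = ∑ Yᵢ` we have `X̄ - E X̄ = S / n` and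
`Xᵢ - X̄ = Yᵢ - S / n`, and since `S / n` is centred the covariance is
`n⁻¹ · n / ((n-1)(n-2)) · ∑ᵢ E[S (Yᵢ - S/n)³]`. Splitting `S = Yᵢ + T` with `T = ∑_{j ≠ i} Yⱼ`
independent of `Yᵢ`, the summand is `E[(Yᵢ + T)((1 - 1/n) Yᵢ - T/n)³]`; all monomials with an odd
power of `Yᵢ` or `T` vanish, and the surviving ones need only `E T² = (n-1) σ²` and
`E T⁴ = (n-1) μ₄ + 3 (n-1)(n-2) σ⁴`. Each summand equals `(n-1)(n-2)/n² · (μ₄ - 3σ⁴)`.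
-/

open Finset

theorem inv_card_mul_sum_sub {ι : Type*} [Fintype ι] [Nonempty ι] (x : ι → ℝ) (m : ℝ) :
    (Fintype.card ι : ℝ)⁻¹ * ∑ j, (x j - m) = (Fintype.card ι : ℝ)⁻¹ * ∑ j, x j - m := by
  have : (Fintype.card ι : ℝ) ≠ 0 := Nat.cast_ne_zero.2 Fintype.card_ne_zero
  rw [sum_sub_distrib, sum_const, card_univ, nsmul_eq_mul]
  field_simp

theorem add_mul_add_pow_three_eq_sum (a b c d x y : ℝ) :
    (a * x + b * y) * (c * x + d * y) ^ 3 =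
      ∑ k : Fin 5, ![b * d ^ 3, a * d ^ 3 + 3 * b * c * d ^ 2, 3 * (a * c * d ^ 2 + b * c ^ 2 * d),
        3 * a * c ^ 2 * d + b * c ^ 3, a * c ^ 3] k * (x ^ (k : ℕ) * y ^ (4 - (k : ℕ))) := by
  simp only [Nat.succ_eq_add_one, Nat.reduceAdd, Fin.sum_univ_five, Fin.isValue, Matrix.cons_val_zero, Matrix.cons_val_one,
    Matrix.cons_val, Fin.coe_ofNat_eq_mod, Nat.reduceMod, Nat.reduceSub, Nat.zero_mod, Nat.one_mod,
    Nat.mod_succ, pow_zero, pow_one, tsub_zero, tsub_self, Nat.add_one_sub_one]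
  ring

section Moments

variable {Ω : Type*} [MeasurableSpace Ω] {P : Measure Ω}

theorem cov_eq_integral_sub_mul [IsProbabilityMeasure P] {f g : Ω → ℝ} (hf : Integrable f P)
    (hfg : Integrable (fun ω => (f ω - ∫ x, f x ∂P) * g ω) P) :
    cov P f g = ∫ ω, (f ω - ∫ x, f x ∂P) * g ω ∂P := by
  have hf' : Integrable (fun ω => f ω - ∫ x, f x ∂P) P := hf.sub (integrable_const _)
  have hcentred : ∫ ω, (f ω - ∫ x, f x ∂P) ∂P = 0 := by
    rw [integral_sub hf (integrable_const _)]
    simp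
  simp_rw [cov, mul_sub]
  rw [integral_sub hfg (hf'.mul_const _), integral_mul_const, hcentred, zero_mul, sub_zero]

theorem memLp_of_integrable_pow {f : Ω → ℝ} {k : ℕ} (hk : Even k) (hk₀ : k ≠ 0)
    (hf : AEStronglyMeasurable f P) (hfk : Integrable (fun ω => f ω ^ k) P) : MemLp f k P := by
  rw [← integrable_norm_rpow_iff hf (by exact_mod_cast hk₀) (by simp)]
  refine hfk.congr (ae_of_all _ fun ω => ?_)
  simp [Real.norm_eq_abs, hk.pow_abs]

theorem MeasureTheory.MemLp.integrable_pow [IsFiniteMeasure P] {f : Ω → ℝ} {p : ℕ}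
    (hf : MemLp f p P) {k : ℕ} (hk : k ≤ p) : Integrable (fun ω => f ω ^ k) P := by
  have hk' : MemLp f k P := hf.mono_exponent (by exact_mod_cast hk)
  refine (integrable_norm_iff (hf.1.pow k)).1 ?_
  simpa only [Pi.pow_apply, norm_pow] using hk'.integrable_norm_pow'

theorem integral_inv_card_mul_sum [IsProbabilityMeasure P] {ι : Type*} [Fintype ι] [Nonempty ι]
    {X : ι → Ω → ℝ} {m : ℝ} (hX : ∀ i, Integrable (X i) P) (hm : ∀ i, ∫ ω, X i ω ∂P = m) :
    ∫ ω, (Fintype.card ι : ℝ)⁻¹ * ∑ i, X i ω ∂P = m := by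
  have : (Fintype.card ι : ℝ) ≠ 0 := Nat.cast_ne_zero.2 Fintype.card_ne_zero
  rw [integral_const_mul, integral_finsetSum _ fun i _ => hX i]
  simp only [hm, sum_const, card_univ, nsmul_eq_mul]
  field_simp

namespace ProbabilityTheory.IndepFun

variable {U V : Ω → ℝ}

section FiniteMeasure

variable [IsFiniteMeasure P] {p q a b : ℕ}

theorem integrable_pow_mul_pow (h : IndepFun U V P) (hU : MemLp U p P) (hV : MemLp V q P)
    (ha : a ≤ p) (hb : b ≤ q) : Integrable (fun ω => U ω ^ a * V ω ^ b) P :=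
  (h.comp (measurable_id.pow_const a) (measurable_id.pow_const b)).integrable_mul
    (hU.integrable_pow ha) (hV.integrable_pow hb)

theorem integral_pow_mul_pow (h : IndepFun U V P) (hU : MemLp U p P) (hV : MemLp V q P)
    (ha : a ≤ p) (hb : b ≤ q) :
    ∫ ω, U ω ^ a * V ω ^ b ∂P = (∫ ω, U ω ^ a ∂P) * ∫ ω, V ω ^ b ∂P :=
  (h.comp (measurable_id.pow_const a) (measurable_id.pow_const b)).integral_mul_eq_mul_integral
    (hU.integrable_pow ha).1 (hV.integrable_pow hb).1

theorem integrable_add_mul_add_pow_three (h : IndepFun U V P) (hU : MemLp U 4 P)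
    (hV : MemLp V 4 P) (a b c d : ℝ) :
    Integrable (fun ω => (a * U ω + b * V ω) * (c * U ω + d * V ω) ^ 3) P := by
  simp_rw [add_mul_add_pow_three_eq_sum]
  exact integrable_finsetSum _ fun k _ =>
    (h.integrable_pow_mul_pow hU hV (Fin.is_le k) (Nat.sub_le 4 k)).const_mul _

end FiniteMeasure

theorem integral_add_mul_add_pow_three [IsProbabilityMeasure P] (h : IndepFun U V P)
    (hU : MemLp U 4 P) (hV : MemLp V 4 P) (hU₀ : ∫ ω, U ω ∂P = 0) (hV₀ : ∫ ω, V ω ∂P = 0)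
    (a b c d : ℝ) :
    ∫ ω, (a * U ω + b * V ω) * (c * U ω + d * V ω) ^ 3 ∂P =
      a * c ^ 3 * ∫ ω, U ω ^ 4 ∂P
        + 3 * (a * c * d ^ 2 + b * c ^ 2 * d) * (∫ ω, U ω ^ 2 ∂P) * (∫ ω, V ω ^ 2 ∂P)
        + b * d ^ 3 * ∫ ω, V ω ^ 4 ∂P := by
  simp_rw [add_mul_add_pow_three_eq_sum]
  rw [integral_finsetSum _ fun k _ =>
    (h.integrable_pow_mul_pow hU hV (Fin.is_le k) (Nat.sub_le 4 k)).const_mul _]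
  simp_rw [integral_const_mul]
  rw [Finset.sum_congr rfl fun k _ => by
    rw [h.integral_pow_mul_pow hU hV (Fin.is_le k) (Nat.sub_le 4 k)]]
  simp only [Nat.succ_eq_add_one, Nat.reduceAdd, Fin.sum_univ_five, Fin.isValue, Matrix.cons_val_zero, Matrix.cons_val_one,
    Matrix.cons_val, Fin.coe_ofNat_eq_mod, Nat.reduceMod, Nat.reduceSub, Nat.zero_mod, Nat.one_mod,
    Nat.mod_succ, pow_zero, pow_one, tsub_zero, tsub_self, Nat.add_one_sub_one, integral_const,
    probReal_univ, smul_eq_mul, hU₀, hV₀]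
  ring

end ProbabilityTheory.IndepFun

variable {ι : Type*} {Y : ι → Ω → ℝ} {σ2 μ4 : ℝ}

theorem integral_finsetSum_eq_zero (hY : ∀ i, Integrable (Y i) P)
    (hY₀ : ∀ i, ∫ ω, Y i ω ∂P = 0) (s : Finset ι) : ∫ ω, (∑ j ∈ s, Y j) ω ∂P = 0 := by
  simp_rw [Finset.sum_apply]
  rw [integral_finsetSum s fun j _ => hY j]
  simp [hY₀]

namespace ProbabilityTheory.iIndepFun

theorem integral_finsetSum_sq [IsFiniteMeasure P] (hind : iIndepFun Y P)
    (hY : ∀ i, MemLp (Y i) 2 P) (hY₀ : ∀ i, ∫ ω, Y i ω ∂P = 0)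
    (hY₂ : ∀ i, ∫ ω, Y i ω ^ 2 ∂P = σ2) (s : Finset ι) :
    ∫ ω, (∑ j ∈ s, Y j) ω ^ 2 ∂P = #s * σ2 := by
  have hS : MemLp (∑ j ∈ s, Y j) 2 P := memLp_finsetSum' s fun j _ => hY j
  rw [← variance_of_integral_eq_zero hS.1.aemeasurable
      (integral_finsetSum_eq_zero (fun i => (hY i).integrable one_le_two) hY₀ s),
    IndepFun.variance_sum (fun j _ => hY j) fun i _ j _ hij => hind.indepFun hij,
    Finset.sum_congr rfl fun j _ => by
      rw [variance_of_integral_eq_zero (hY j).1.aemeasurable (hY₀ j), hY₂ j],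
    sum_const, nsmul_eq_mul]

theorem integral_finsetSum_pow_four [IsProbabilityMeasure P] (hind : iIndepFun Y P)
    (hmeas : ∀ i, Measurable (Y i)) (hY : ∀ i, MemLp (Y i) 4 P)
    (hY₀ : ∀ i, ∫ ω, Y i ω ∂P = 0) (hY₂ : ∀ i, ∫ ω, Y i ω ^ 2 ∂P = σ2)
    (hY₄ : ∀ i, ∫ ω, Y i ω ^ 4 ∂P = μ4) (s : Finset ι) :
    ∫ ω, (∑ j ∈ s, Y j) ω ^ 4 ∂P = #s * μ4 + 3 * #s * (#s - 1) * σ2 ^ 2 := by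
  classical
  induction s using Finset.induction_on with
  | empty => simp
  | @insert a s ha ih =>
    have hexpand : ∀ ω, (∑ j ∈ insert a s, Y j) ω ^ 4 =
        (1 * Y a ω + 1 * (∑ j ∈ s, Y j) ω) * (1 * Y a ω + 1 * (∑ j ∈ s, Y j) ω) ^ 3 :=
      fun ω => by rw [sum_insert ha, Pi.add_apply]; ring
    simp_rw [hexpand]
    rw [IndepFun.integral_add_mul_add_pow_three (hind.indepFun_finsetSum_of_notMem hmeas ha).symm
        (hY a) (memLp_finsetSum' s fun j _ => hY j) (hY₀ a)
        (integral_finsetSum_eq_zero (fun i => (hY i).integrable (by norm_num)) hY₀ s),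
      hY₄ a, hY₂ a, ih, integral_finsetSum_sq hind (fun i => (hY i).mono_exponent (by norm_num))
        hY₀ hY₂ s, card_insert_of_notMem ha]
    push_cast
    ring

theorem integral_sum_mul_sub_inv_card_mul_sum_pow_three [IsProbabilityMeasure P] [Fintype ι]
    [DecidableEq ι] (hind : iIndepFun Y P) (hmeas : ∀ i, Measurable (Y i))
    (hY : ∀ i, MemLp (Y i) 4 P) (hY₀ : ∀ i, ∫ ω, Y i ω ∂P = 0)
    (hY₂ : ∀ i, ∫ ω, Y i ω ^ 2 ∂P = σ2) (hY₄ : ∀ i, ∫ ω, Y i ω ^ 4 ∂P = μ4) (i : ι) :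
    Integrable (fun ω => (∑ j, Y j ω) * (Y i ω - (Fintype.card ι : ℝ)⁻¹ * ∑ j, Y j ω) ^ 3) P ∧
    ∫ ω, (∑ j, Y j ω) * (Y i ω - (Fintype.card ι : ℝ)⁻¹ * ∑ j, Y j ω) ^ 3 ∂P =
      ((Fintype.card ι : ℝ) - 1) * ((Fintype.card ι : ℝ) - 2) / (Fintype.card ι : ℝ) ^ 2
        * (μ4 - 3 * σ2 ^ 2) := by
  have : Nonempty ι := ⟨i⟩
  set n : ℝ := (Fintype.card ι : ℝ)
  have hn : n ≠ 0 := Nat.cast_ne_zero.2 Fintype.card_ne_zero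
  have hrest : (#(univ.erase i) : ℝ) = n - 1 := by
    rw [card_erase_of_mem (mem_univ i), card_univ, Nat.cast_pred Fintype.card_pos]
  set T := ∑ j ∈ univ.erase i, Y j
  have hsplit : ∀ ω, (∑ j, Y j ω) * (Y i ω - n⁻¹ * ∑ j, Y j ω) ^ 3 =
      (1 * Y i ω + 1 * T ω) * ((1 - n⁻¹) * Y i ω + (-n⁻¹) * T ω) ^ 3 := fun ω => by
    rw [← add_sum_erase univ (fun j => Y j ω) (mem_univ i), ← Finset.sum_apply]
    ring
  have hindT : IndepFun (Y i) T P :=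
    (hind.indepFun_finsetSum_of_notMem hmeas (notMem_erase i univ)).symm
  have hT : MemLp T 4 P := memLp_finsetSum' _ fun j _ => hY j
  simp_rw [hsplit]
  refine ⟨hindT.integrable_add_mul_add_pow_three (hY i) hT _ _ _ _, ?_⟩
  rw [hindT.integral_add_mul_add_pow_three (hY i) hT (hY₀ i)
      (integral_finsetSum_eq_zero (fun i => (hY i).integrable (by norm_num)) hY₀ _),
    hY₄ i, hY₂ i, integral_finsetSum_sq hind (fun i => (hY i).mono_exponent (by norm_num))
      hY₀ hY₂ _, integral_finsetSum_pow_four hind hmeas hY hY₀ hY₂ hY₄, hrest]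
  field_simp
  ring

theorem integral_inv_card_mul_sum_mul_sum_sub_pow_three [IsProbabilityMeasure P] [Fintype ι]
    [DecidableEq ι] (hind : iIndepFun Y P) (hmeas : ∀ i, Measurable (Y i))
    (hY : ∀ i, MemLp (Y i) 4 P) (hY₀ : ∀ i, ∫ ω, Y i ω ∂P = 0)
    (hY₂ : ∀ i, ∫ ω, Y i ω ^ 2 ∂P = σ2) (hY₄ : ∀ i, ∫ ω, Y i ω ^ 4 ∂P = μ4) :
    Integrable (fun ω => (Fintype.card ι : ℝ)⁻¹ * (∑ j, Y j ω) *
      ∑ i, (Y i ω - (Fintype.card ι : ℝ)⁻¹ * ∑ j, Y j ω) ^ 3) P ∧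
    ∫ ω, (Fintype.card ι : ℝ)⁻¹ * (∑ j, Y j ω) *
      ∑ i, (Y i ω - (Fintype.card ι : ℝ)⁻¹ * ∑ j, Y j ω) ^ 3 ∂P =
      ((Fintype.card ι : ℝ) - 1) * ((Fintype.card ι : ℝ) - 2) / (Fintype.card ι : ℝ) ^ 2
        * (μ4 - 3 * σ2 ^ 2) := by
  have hterm := integral_sum_mul_sub_inv_card_mul_sum_pow_three hind hmeas hY hY₀ hY₂ hY₄
  have hdistrib : ∀ ω, (Fintype.card ι : ℝ)⁻¹ * (∑ j, Y j ω) *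
      ∑ i, (Y i ω - (Fintype.card ι : ℝ)⁻¹ * ∑ j, Y j ω) ^ 3 = (Fintype.card ι : ℝ)⁻¹ *
      ∑ i, (∑ j, Y j ω) * (Y i ω - (Fintype.card ι : ℝ)⁻¹ * ∑ j, Y j ω) ^ 3 := fun ω => by
    rw [mul_assoc, mul_sum]
  simp_rw [hdistrib]
  refine ⟨(integrable_finsetSum _ fun i _ => (hterm i).1).const_mul _, ?_⟩
  rw [integral_const_mul, integral_finsetSum _ fun i _ => (hterm i).1,
    sum_congr rfl fun i _ => (hterm i).2, sum_const, card_univ, nsmul_eq_mul]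
  rcases isEmpty_or_nonempty ι with _ | _
  · simp
  · field_simp

end ProbabilityTheory.iIndepFun

end Moments

theorem cov_sampleMean_sampleThirdMoment_general
    {Ω : Type*} [MeasureSpace Ω] [IsProbabilityMeasure (ℙ : Measure Ω)]
    (n : ℕ) (hn : 3 ≤ n) (X : Fin n → Ω → ℝ) (μ σ μ4 : ℝ)
    (hmeas : ∀ i, Measurable (X i))
    (hindep : iIndepFun X ℙ)
    (hmom : ∀ i, Integrable (fun ω => (X i ω) ^ 4) ℙ)
    (hmean : ∀ i, 𝔼[X i] = μ)
    (hvar : ∀ i, variance (X i) ℙ = σ ^ 2)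
    (hμ4 : ∀ i, (∫ ω, (X i ω - μ) ^ 4 ∂ℙ) = μ4) :
    cov ℙ (fun ω => (n : ℝ)⁻¹ * ∑ i, X i ω)
      (fun ω => (n : ℝ) / (((n : ℝ) - 1) * ((n : ℝ) - 2)) *
        ∑ i, (X i ω - (n : ℝ)⁻¹ * ∑ j, X j ω) ^ 3)
      = (μ4 - 3 * σ ^ 4) / n := by
  have hn₃ : (3 : ℝ) ≤ n := by exact_mod_cast hn
  have hn₀ : (n : ℝ) ≠ 0 := by linarith
  have hn₁ : (n : ℝ) - 1 ≠ 0 := by linarith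
  have hn₂ : (n : ℝ) - 2 ≠ 0 := by linarith
  have hXL4 : ∀ i, MemLp (X i) 4 ℙ := fun i =>
    memLp_of_integrable_pow (by decide) (by norm_num) (hmeas i).aestronglyMeasurable (hmom i)
  have hXint : ∀ i, Integrable (X i) ℙ := fun i => (hXL4 i).integrable (by norm_num)
  set Y : Fin n → Ω → ℝ := fun i ω => X i ω - μ
  have hY₀ : ∀ i, ∫ ω, Y i ω ∂ℙ = 0 := fun i => by
    simp [Y, integral_sub (hXint i) (integrable_const μ), hmean i]
  have hY₂ : ∀ i, ∫ ω, Y i ω ^ 2 ∂ℙ = σ ^ 2 := fun i => by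
    rw [← hvar i, variance_eq_integral (hmeas i).aemeasurable, hmean i]
  have hYind : iIndepFun Y ℙ := hindep.comp (fun _ x => x - μ) fun _ => measurable_id.sub_const μ
  have hkey := hYind.integral_inv_card_mul_sum_mul_sum_sub_pow_three
    (fun i => (hmeas i).sub_const μ) (fun i => (hXL4 i).sub (memLp_const μ)) hY₀ hY₂ hμ4
  simp only [Fintype.card_fin] at hkey
  have : Nonempty (Fin n) := ⟨⟨0, by omega⟩⟩
  have hXbar : ∫ ω, (n : ℝ)⁻¹ * ∑ i, X i ω ∂ℙ = μ := by
    simpa using integral_inv_card_mul_sum hXint hmean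
  have hshift : ∀ ω, (n : ℝ)⁻¹ * ∑ j, Y j ω = (n : ℝ)⁻¹ * ∑ j, X j ω - μ := fun ω => by
    simpa only [Fintype.card_fin] using inv_card_mul_sum_sub (X · ω) μ
  have hpt : ∀ ω, ((n : ℝ)⁻¹ * ∑ i, X i ω - ∫ ω', (n : ℝ)⁻¹ * ∑ i, X i ω' ∂ℙ) *
      ((n : ℝ) / (((n : ℝ) - 1) * ((n : ℝ) - 2)) * ∑ i, (X i ω - (n : ℝ)⁻¹ * ∑ j, X j ω) ^ 3) =
      (n : ℝ) / (((n : ℝ) - 1) * ((n : ℝ) - 2)) *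
        ((n : ℝ)⁻¹ * (∑ j, Y j ω) * ∑ i, (Y i ω - (n : ℝ)⁻¹ * ∑ j, Y j ω) ^ 3) := fun ω => by
    simp only [hshift, hXbar, Y, sub_sub_sub_cancel_right]
    ring
  rw [cov_eq_integral_sub_mul ((integrable_finsetSum univ fun i _ => hXint i).const_mul _)
      (by simp_rw [hpt]; exact hkey.1.const_mul _)]
  simp_rw [hpt]
  rw [integral_const_mul, hkey.2]
  field_simp

/-- If `X₁, …, Xₙ` (with `n ≥ 3`) are i.i.d. with mean `μ`, variance `σ² > 0` and
`E X₁⁴ < ∞`, then the covariance of the sample mean `X̄` and the unbiased third central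
sample moment `μ̂₃ = n/((n-1)(n-2)) Σᵢ (Xᵢ - X̄)³` equals `(μ₄ - 3σ⁴)/n`,
where `μ₄ = E(X₁ - μ)⁴`. -/
theorem cov_sampleMean_sampleThirdMoment
    {Ω : Type*} [MeasureSpace Ω] [IsProbabilityMeasure (ℙ : Measure Ω)]
    (n : ℕ) (hn : 3 ≤ n) (X : Fin n → Ω → ℝ) (μ σ μ4 : ℝ)
    (hmeas : ∀ i, Measurable (X i))
    (hindep : iIndepFun X ℙ)
    (hident : ∀ i j, IdentDistrib (X i) (X j) ℙ ℙ)
    (hmom : ∀ i, Integrable (fun ω => (X i ω) ^ 4) ℙ)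
    (hmean : ∀ i, 𝔼[X i] = μ)
    (hσ : 0 < σ) (hvar : ∀ i, variance (X i) ℙ = σ ^ 2)
    (hμ4 : ∀ i, (∫ ω, (X i ω - μ) ^ 4 ∂ℙ) = μ4) :
    cov ℙ (fun ω => (n : ℝ)⁻¹ * ∑ i, X i ω)
      (fun ω => (n : ℝ) / (((n : ℝ) - 1) * ((n : ℝ) - 2)) *
        ∑ i, (X i ω - (n : ℝ)⁻¹ * ∑ j, X j ω) ^ 3)
      = (μ4 - 3 * σ ^ 4) / n :=
  cov_sampleMean_sampleThirdMoment_general n hn X μ σ μ4 hmeas hindep hmom hmean hvar hμ4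
end

section
/- (Lemma 2(i), equality case) Let X be a real random variable with E X⁴ < ∞, mean μ, and variance σ² > 0. Let γ = μ₃/σ³ be the skewness and κ = μ₄/σ⁴ − 3 the excess kurtosis, where μ_k = E(X − μ)^k. Then γ² = κ + 2 holds if and only if X has a two-point distribution, i.e., there exist real numbers a ≠ b with P(X = a) + P(X = b) = 1, P(X = a) > 0, and P(X = b) > 0. -/
/-!
With `Y = X - μ`, expanding the square and completing squares in `p` and `q` gives
`E (Y² - p Y + q)² = σ⁴ (κ + 2 - γ²) + (q + σ²)² + σ² (p - μ₃/σ²)²`.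
Hence `γ² ≤ κ + 2`, with equality iff `Y² - (μ₃/σ²) Y - σ² = 0` almost surely; this quadratic
has two distinct real roots, and `σ > 0` forces both of them to carry mass. Conversely, if `X`
only takes the values `a` and `b`, the left side vanishes for the quadratic
`(Y - (a - μ)) (Y - (b - μ))`, so all three nonnegative terms on the right vanish.
-/

open MeasureTheory ProbabilityTheory

section Moments

variable {Ω : Type*} [MeasurableSpace Ω] {P : Measure Ω} {Y : Ω → ℝ}

lemma memLp_of_integrable_pow_s7 {n : ℕ} (hn : Even n) (hn0 : n ≠ 0)
    (hY : AEStronglyMeasurable Y P) (h : Integrable (fun ω => Y ω ^ n) P) : MemLp Y n P := by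
  rw [← integrable_norm_rpow_iff hY (by simpa using hn0) (by simp)]
  simpa [Real.norm_eq_abs, hn.pow_abs] using h

lemma MeasureTheory.MemLp.integrable_pow_of_le [IsFiniteMeasure P] {p : ENNReal} {k : ℕ}
    (hY : MemLp Y p P) (hk : (k : ENNReal) ≤ p) : Integrable (fun ω => Y ω ^ k) P := by
  have := (hY.mono_exponent hk).integrable_norm_pow'
  exact (integrable_norm_iff (hY.aestronglyMeasurable.pow k)).1 (by simpa [norm_pow] using this)

lemma sq_quadratic_eq (y p q : ℝ) :
    (y ^ 2 - p * y + q) ^ 2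
      = y ^ 4 - 2 * p * y ^ 3 + (p ^ 2 + 2 * q) * y ^ 2 - 2 * p * q * y + q ^ 2 := by
  ring

lemma integrable_sq_quadratic [IsFiniteMeasure P] (hY : MemLp Y 4 P) (p q : ℝ) :
    Integrable (fun ω => (Y ω ^ 2 - p * Y ω + q) ^ 2) P := by
  have h1 := hY.integrable_pow_of_le (k := 1) (by norm_num)
  have h2 := hY.integrable_pow_of_le (k := 2) (by norm_num)
  have h3 := hY.integrable_pow_of_le (k := 3) (by norm_num)
  have h4 := hY.integrable_pow_of_le (k := 4) (by norm_num)
  simp only [pow_one] at h1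
  simp only [sq_quadratic_eq]
  fun_prop

lemma integral_sq_quadratic [IsProbabilityMeasure P] (hY : MemLp Y 4 P) (p q : ℝ) :
    ∫ ω, (Y ω ^ 2 - p * Y ω + q) ^ 2 ∂P = ∫ ω, Y ω ^ 4 ∂P - 2 * p * ∫ ω, Y ω ^ 3 ∂P
      + (p ^ 2 + 2 * q) * ∫ ω, Y ω ^ 2 ∂P - 2 * p * q * ∫ ω, Y ω ∂P + q ^ 2 := by
  have h1 := hY.integrable_pow_of_le (k := 1) (by norm_num)
  have h2 := hY.integrable_pow_of_le (k := 2) (by norm_num)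
  have h3 := hY.integrable_pow_of_le (k := 3) (by norm_num)
  have h4 := hY.integrable_pow_of_le (k := 4) (by norm_num)
  simp only [pow_one] at h1
  simp only [sq_quadratic_eq]
  rw [integral_add (by fun_prop) (by fun_prop), integral_sub (by fun_prop) (by fun_prop),
    integral_add (by fun_prop) (by fun_prop), integral_sub (by fun_prop) (by fun_prop)]
  simp [integral_const_mul]

lemma integral_sq_quadratic_eq_of_moments [IsProbabilityMeasure P] {m2 m3 m4 : ℝ}
    (hY : MemLp Y 4 P) (h1 : ∫ ω, Y ω ∂P = 0) (h2 : ∫ ω, Y ω ^ 2 ∂P = m2)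
    (h3 : ∫ ω, Y ω ^ 3 ∂P = m3) (h4 : ∫ ω, Y ω ^ 4 ∂P = m4) (hm2 : m2 ≠ 0) (p q : ℝ) :
    ∫ ω, (Y ω ^ 2 - p * Y ω + q) ^ 2 ∂P
      = (m4 - m3 ^ 2 / m2 - m2 ^ 2) + (q + m2) ^ 2 + m2 * (p - m3 / m2) ^ 2 := by
  rw [integral_sq_quadratic hY p q, h1, h2, h3, h4]
  field_simp
  ring

lemma sq_div_add_sq_le_of_moments [IsProbabilityMeasure P] {m2 m3 m4 : ℝ}
    (hY : MemLp Y 4 P) (h1 : ∫ ω, Y ω ∂P = 0) (h2 : ∫ ω, Y ω ^ 2 ∂P = m2)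
    (h3 : ∫ ω, Y ω ^ 3 ∂P = m3) (h4 : ∫ ω, Y ω ^ 4 ∂P = m4) (hm2 : m2 ≠ 0) :
    m3 ^ 2 / m2 + m2 ^ 2 ≤ m4 := by
  have h : 0 ≤ ∫ ω, (Y ω ^ 2 - m3 / m2 * Y ω + -m2) ^ 2 ∂P :=
    integral_nonneg fun ω => sq_nonneg _
  rw [integral_sq_quadratic_eq_of_moments hY h1 h2 h3 h4 hm2] at h
  simp only [neg_add_cancel, sub_self] at h
  linarith

lemma exists_ae_eq_or_eq_of_integral_sq_quadratic_eq_zero [IsFiniteMeasure P]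
    (hY : MemLp Y 4 P) {p q : ℝ} (hdisc : 0 < p ^ 2 - 4 * q)
    (h : ∫ ω, (Y ω ^ 2 - p * Y ω + q) ^ 2 ∂P = 0) :
    ∃ u v : ℝ, u ≠ v ∧ ∀ᵐ ω ∂P, Y ω = u ∨ Y ω = v := by
  set d := √(p ^ 2 - 4 * q)
  have hd : d ^ 2 = p ^ 2 - 4 * q := Real.sq_sqrt hdisc.le
  have hd0 : 0 < d := Real.sqrt_pos.2 hdisc
  refine ⟨(p + d) / 2, (p - d) / 2, by intro h; linarith, ?_⟩
  have hae := (integral_eq_zero_iff_of_nonneg (fun ω => sq_nonneg _)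
    (integrable_sq_quadratic hY p q)).1 h
  filter_upwards [hae] with ω hω
  have hfac : (Y ω - (p + d) / 2) * (Y ω - (p - d) / 2) = 0 := by
    linear_combination (pow_eq_zero_iff two_ne_zero).1 hω - hd / 4
  simpa [sub_eq_zero] using hfac

lemma integral_sq_quadratic_eq_zero_of_ae_eq_or_eq {u v : ℝ}
    (h : ∀ᵐ ω ∂P, Y ω = u ∨ Y ω = v) :
    ∫ ω, (Y ω ^ 2 - (u + v) * Y ω + u * v) ^ 2 ∂P = 0 := by
  refine integral_eq_zero_of_ae ?_
  filter_upwards [h] with ω hω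
  rcases hω with hω | hω <;> simp only [hω, Pi.zero_apply] <;> ring

end Moments

section TwoPoint

variable {Ω : Type*} [MeasurableSpace Ω] {P : Measure Ω} [IsProbabilityMeasure P] {X : Ω → ℝ}
  {a b : ℝ}

lemma measure_eq_add_measure_eq_eq_one_iff (hX : Measurable X) (hab : a ≠ b) :
    P {ω | X ω = a} + P {ω | X ω = b} = 1 ↔ ∀ᵐ ω ∂P, X ω = a ∨ X ω = b := by
  have hdisj : Disjoint {ω | X ω = a} {ω | X ω = b} :=
    Set.disjoint_left.2 fun ω ha hb => hab (ha.symm.trans hb)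
  have hmeas : MeasurableSet {ω | X ω = a ∨ X ω = b} :=
    (hX (measurableSet_singleton a)).union (hX (measurableSet_singleton b))
  rw [← measure_union hdisj (hX (measurableSet_singleton b)), ← Set.ofPred_or,
    ae_iff_measure_eq hmeas.nullMeasurableSet, measure_univ]

lemma measure_eq_pos_of_ae_eq_or_eq (h : ∀ᵐ ω ∂P, X ω = a ∨ X ω = b) (hX : Var[X; P] ≠ 0) :
    0 < P {ω | X ω = a} := by
  refine pos_iff_ne_zero.2 fun ha => hX ?_
  have hb : X =ᵐ[P] fun _ => b := by
    filter_upwards [h, measure_eq_zero_iff_ae_notMem.1 ha] with ω hω hωa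
    exact hω.resolve_left hωa
  rw [variance_congr hb]
  simp [variance, evariance]

end TwoPoint

/-- Lemma 2(i), equality case: for a real random variable `X` with `E X⁴ < ∞`, mean `μ` and
variance `σ² > 0`, with skewness `γ = μ₃/σ³` and excess kurtosis `κ = μ₄/σ⁴ - 3`, the
equality `γ² = κ + 2` holds if and only if `X` has a two-point distribution. -/
theorem sq_skewness_eq_kurtosis_add_two_iff_twoPoint
    {Ω : Type*} [MeasureSpace Ω] [IsProbabilityMeasure (ℙ : Measure Ω)]
    (X : Ω → ℝ) (μ σ μ3 μ4 γ κ : ℝ)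
    (hmeas : Measurable X)
    (hmom : Integrable (fun ω => (X ω) ^ 4) ℙ)
    (hmean : 𝔼[X] = μ)
    (hσ : 0 < σ) (hvar : variance X ℙ = σ ^ 2)
    (hμ3 : (∫ ω, (X ω - μ) ^ 3 ∂ℙ) = μ3)
    (hμ4 : (∫ ω, (X ω - μ) ^ 4 ∂ℙ) = μ4)
    (hγ : γ = μ3 / σ ^ 3) (hκ : κ = μ4 / σ ^ 4 - 3) :
    γ ^ 2 = κ + 2 ↔
      ∃ a b : ℝ, a ≠ b ∧
        ℙ {ω | X ω = a} + ℙ {ω | X ω = b} = 1 ∧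
        0 < ℙ {ω | X ω = a} ∧ 0 < ℙ {ω | X ω = b} := by
  have hX4 : MemLp X 4 ℙ :=
    memLp_of_integrable_pow_s7 (n := 4) (by decide) (by norm_num) hmeas.aestronglyMeasurable hmom
  have hcent : MemLp (fun ω => X ω - μ) 4 ℙ := hX4.sub (memLp_const μ)
  have hm1 : ∫ ω, (X ω - μ) ∂ℙ = 0 := by
    rw [integral_sub (hX4.integrable (by norm_num)) (integrable_const μ), ← hmean]
    simp
  have hm2 : ∫ ω, (X ω - μ) ^ 2 ∂ℙ = σ ^ 2 := by
    rw [← hvar, ← hmean, variance_eq_integral hmeas.aemeasurable]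
  have hσ2 : σ ^ 2 ≠ 0 := by positivity
  have key := integral_sq_quadratic_eq_of_moments hcent hm1 hm2 hμ3 hμ4 hσ2
  have hpearson := sq_div_add_sq_le_of_moments hcent hm1 hm2 hμ3 hμ4 hσ2
  have hγκ : γ ^ 2 = κ + 2 ↔ μ4 - μ3 ^ 2 / σ ^ 2 - (σ ^ 2) ^ 2 = 0 := by
    rw [hγ, hκ]
    field_simp
    constructor <;> intro h <;> linarith
  rw [hγκ]
  constructor
  · intro h
    obtain ⟨u, v, huv, hY⟩ := exists_ae_eq_or_eq_of_integral_sq_quadratic_eq_zero hcent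
      (p := μ3 / σ ^ 2) (q := -σ ^ 2) (by nlinarith [sq_nonneg (μ3 / σ ^ 2)])
      (by rw [key, h]; ring)
    have hX : ∀ᵐ ω ∂ℙ, X ω = u + μ ∨ X ω = v + μ :=
      hY.mono fun ω => Or.imp sub_eq_iff_eq_add.1 sub_eq_iff_eq_add.1
    have hvar0 : Var[X; ℙ] ≠ 0 := hvar ▸ hσ2
    have huv' : u + μ ≠ v + μ := by simpa using huv
    exact ⟨u + μ, v + μ, huv', (measure_eq_add_measure_eq_eq_one_iff hmeas huv').2 hX,
      measure_eq_pos_of_ae_eq_or_eq hX hvar0,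
      measure_eq_pos_of_ae_eq_or_eq (hX.mono fun _ => Or.symm) hvar0⟩
  · rintro ⟨a, b, hab, hsum, -, -⟩
    have hY : ∀ᵐ ω ∂ℙ, X ω - μ = a - μ ∨ X ω - μ = b - μ :=
      ((measure_eq_add_measure_eq_eq_one_iff hmeas hab).1 hsum).mono fun ω =>
        Or.imp (congrArg (· - μ)) (congrArg (· - μ))
    have h0 := integral_sq_quadratic_eq_zero_of_ae_eq_or_eq hY
    rw [key] at h0
    nlinarith [sq_nonneg ((a - μ) * (b - μ) + σ ^ 2), sq_nonneg (a - μ + (b - μ) - μ3 / σ ^ 2),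
      sq_nonneg σ]
end

section
/- (Lemma 2(ii), equality for two-point distributions) Let X be a real random variable with a two-point distribution, i.e., there exist real numbers a ≠ b with P(X = a) + P(X = b) = 1, P(X = a) > 0, and P(X = b) > 0. Let μ be its mean, σ² > 0 its variance, γ = μ₃/σ³ its skewness, κ = μ₄/σ⁴ − 3 its excess kurtosis, and λ = μ₆/σ⁶ − 15κ − 10γ² − 15 its sixth standardized cumulant, where μ_k = E(X − μ)^k. Then κ² = λ + 9(κ + γ²) + 6. -/
open MeasureTheory ProbabilityTheory

/-! Centre the two atoms at the mean, `c = a - μ` and `d = b - μ`, with masses `p` and `q`.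
The central moments `m k = p c^k + q d^k` satisfy the recurrence of the characteristic
polynomial `(x - c)(x - d)`, and `m 0 = 1`, `m 1 = 0`; so every central moment is a polynomial
in `e = c + d` and `s = -cd = σ²`, and one checks `m₄² = σ² (m₆ - m₃²)`, which is the claim
after dividing by `σ⁸`. -/

section TwoPointIntegral

variable {Ω : Type*} [MeasurableSpace Ω] {P : Measure Ω} {X : Ω → ℝ} {a b : ℝ}

lemma ae_eq_or_eq_of_measure_add_eq_one [IsProbabilityMeasure P] (hX : Measurable X)
    (hab : a ≠ b) (hsum : P {ω | X ω = a} + P {ω | X ω = b} = 1) :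
    ∀ᵐ ω ∂P, X ω = a ∨ X ω = b := by
  have hdisj : Disjoint {ω | X ω = a} {ω | X ω = b} :=
    Set.disjoint_left.2 fun _ ha hb => hab (ha.symm.trans hb)
  exact (mem_ae_iff_prob_eq_one ((hX (measurableSet_singleton a)).union
    (hX (measurableSet_singleton b)))).2
    ((measure_union hdisj (hX (measurableSet_singleton b))).trans hsum)

lemma integral_comp_of_ae_eq_or_eq [IsFiniteMeasure P] (hX : Measurable X) (hab : a ≠ b)
    (hae : ∀ᵐ ω ∂P, X ω = a ∨ X ω = b) (g : ℝ → ℝ) :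
    ∫ ω, g (X ω) ∂P = P.real {ω | X ω = a} * g a + P.real {ω | X ω = b} * g b := by
  have hA : MeasurableSet {ω | X ω = a} := hX (measurableSet_singleton a)
  have hB : MeasurableSet {ω | X ω = b} := hX (measurableSet_singleton b)
  have hsplit : (fun ω => g (X ω)) =ᵐ[P] fun ω =>
      {ω | X ω = a}.indicator (fun _ => g a) ω + {ω | X ω = b}.indicator (fun _ => g b) ω := by
    filter_upwards [hae] with ω hω
    rcases hω with h | h
    · simp [Set.indicator, h, hab]
    · simp [Set.indicator, h, hab.symm]
  rw [integral_congr_ae hsplit, integral_add ((integrable_const _).indicator hA)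
    ((integrable_const _).indicator hB), integral_indicator_const _ hA,
    integral_indicator_const _ hB, smul_eq_mul, smul_eq_mul]

end TwoPointIntegral

lemma sq_fourth_moment_eq_of_twoPoint {p q c d : ℝ} (hpq : p + q = 1)
    (hmean : p * c + q * d = 0) :
    (p * c ^ 4 + q * d ^ 4) ^ 2 =
      (p * c ^ 2 + q * d ^ 2) * ((p * c ^ 6 + q * d ^ 6) - (p * c ^ 3 + q * d ^ 3) ^ 2) := by
  set m : ℕ → ℝ := fun k => p * c ^ k + q * d ^ k with hm
  have hrec : ∀ k, m (k + 2) = (c + d) * m (k + 1) - c * d * m k := fun k => by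
    simp only [hm]; ring
  have h0 : m 0 = 1 := by simpa [hm] using hpq
  have h1 : m 1 = 0 := by simpa [hm] using hmean
  have h2 : m 2 = -(c * d) := by rw [hrec 0, h0, h1]; ring
  have h3 : m 3 = -(c * d) * (c + d) := by rw [hrec 1, h1, h2]; ring
  have h4 : m 4 = -(c * d) * ((c + d) ^ 2 - c * d) := by rw [hrec 2, h2, h3]; ring
  have h5 : m 5 = (c + d) * m 4 - c * d * m 3 := hrec 3
  have h6 : m 6 = (c + d) * m 5 - c * d * m 4 := hrec 4
  change m 4 ^ 2 = m 2 * (m 6 - m 3 ^ 2)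
  rw [h6, h5, h4, h3, h2]
  ring

/-- Lemma 2(ii), equality for two-point distributions: if `X` has a two-point distribution
with mean `μ` and variance `σ² > 0`, then its skewness `γ`, excess kurtosis `κ` and sixth
standardized cumulant `λ` satisfy `κ² = λ + 9(κ + γ²) + 6`. -/
theorem sq_kurtosis_eq_of_twoPoint
    {Ω : Type*} [MeasureSpace Ω] [IsProbabilityMeasure (ℙ : Measure Ω)]
    (X : Ω → ℝ) (μ σ μ3 μ4 μ6 γ κ lam : ℝ)
    (hmeas : Measurable X)
    (htwo : ∃ a b : ℝ, a ≠ b ∧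
      ℙ {ω | X ω = a} + ℙ {ω | X ω = b} = 1 ∧
      0 < ℙ {ω | X ω = a} ∧ 0 < ℙ {ω | X ω = b})
    (hmean : 𝔼[X] = μ)
    (hσ : 0 < σ) (hvar : variance X ℙ = σ ^ 2)
    (hμ3 : (∫ ω, (X ω - μ) ^ 3 ∂ℙ) = μ3)
    (hμ4 : (∫ ω, (X ω - μ) ^ 4 ∂ℙ) = μ4)
    (hμ6 : (∫ ω, (X ω - μ) ^ 6 ∂ℙ) = μ6)
    (hγ : γ = μ3 / σ ^ 3) (hκ : κ = μ4 / σ ^ 4 - 3)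
    (hlam : lam = μ6 / σ ^ 6 - 15 * κ - 10 * γ ^ 2 - 15) :
    κ ^ 2 = lam + 9 * (κ + γ ^ 2) + 6 := by
  obtain ⟨a, b, hab, hsum, -, -⟩ := htwo
  have hint := integral_comp_of_ae_eq_or_eq hmeas hab
    (ae_eq_or_eq_of_measure_add_eq_one hmeas hab hsum)
  have hpq := hint fun _ => 1
  have hmean' := hint id
  simp only [integral_const, probReal_univ, smul_eq_mul, mul_one, id] at hpq hmean'
  rw [variance_eq_integral hmeas.aemeasurable, hmean, hint fun x => (x - μ) ^ 2] at hvar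
  rw [hint fun x => (x - μ) ^ 3] at hμ3
  rw [hint fun x => (x - μ) ^ 4] at hμ4
  rw [hint fun x => (x - μ) ^ 6] at hμ6
  have hkey := sq_fourth_moment_eq_of_twoPoint (c := a - μ) (d := b - μ) hpq.symm
    (by linear_combination hmean - hmean' + μ * hpq)
  rw [hvar, hμ3, hμ4, hμ6] at hkey
  subst hγ hκ hlam
  field_simp
  linear_combination hkey
end

section
/- Let X be a real random variable with E X⁴ < ∞, mean μ, variance σ² > 0, skewness γ = μ₃/σ³, and excess kurtosis κ = μ₄/σ⁴ − 3, where μ_k = E(X − μ)^k. For every integer n ≥ 2, the quantity ρ₂ = γ / √(κ + 3 − (n−3)/(n−1)) satisfies |ρ₂| < 1. -/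
/-!
Cauchy–Schwarz for the covariance of `X` and `(X - μ)²` gives Pearson's inequality
`μ₃² ≤ σ² (μ₄ - σ⁴)`, i.e. `γ² ≤ κ + 2`. Since `(n - 3)/(n - 1) < 1`, the radicand
`κ + 3 - (n - 3)/(n - 1)` is strictly larger than `κ + 2 ≥ γ²`.
-/

open MeasureTheory ProbabilityTheory

namespace MeasureTheory

variable {α : Type*} {mα : MeasurableSpace α} {μ : Measure α} {f : α → ℝ}

lemma memLp_four_iff_integrable_pow_four (hf : AEStronglyMeasurable f μ) :
    MemLp f 4 μ ↔ Integrable (fun x => f x ^ 4) μ := by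
  rw [← integrable_norm_rpow_iff hf (by norm_num) (by norm_num)]
  simp [Real.norm_eq_abs, Even.pow_abs ⟨2, rfl⟩]

lemma MemLp.integrable_pow_of_le_s10 [IsFiniteMeasure μ] {p k : ℕ} (hf : MemLp f p μ)
    (hk : k ≤ p) : Integrable (fun x => f x ^ k) μ := by
  refine ((hf.mono_exponent (by exact_mod_cast hk)).integrable_norm_pow').mono'
    (hf.aestronglyMeasurable.pow k) (ae_of_all _ fun x => ?_)
  simp [norm_pow]

end MeasureTheory

namespace ProbabilityTheory

variable {Ω : Type*} {mΩ : MeasurableSpace Ω} {μ : Measure Ω} {X Y : Ω → ℝ}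

lemma covariance_sq_le_variance_mul_variance [IsFiniteMeasure μ] (hX : MemLp X 2 μ)
    (hY : MemLp Y 2 μ) : cov[X, Y; μ] ^ 2 ≤ Var[X; μ] * Var[Y; μ] := by
  have hquad : ∀ t : ℝ, 0 ≤ Var[X; μ] * (t * t) + 2 * cov[X, Y; μ] * t + Var[Y; μ] := by
    intro t
    have hexpand := variance_add (hX.const_smul t) hY
    rw [variance_smul, covariance_smul_left] at hexpand
    nlinarith [variance_nonneg (t • X + Y) μ]
  have hdisc := discrim_le_zero hquad
  rw [discrim] at hdisc
  nlinarith

lemma centralMoment_eq_integral (X : Ω → ℝ) (p : ℕ) :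
    centralMoment X p μ = ∫ ω, (X ω - μ[X]) ^ p ∂μ := rfl

section

variable [IsProbabilityMeasure μ]

lemma covariance_sq_sub_mean (hX : MemLp X 3 μ) :
    cov[X, fun ω => (X ω - μ[X]) ^ 2; μ] = centralMoment X 3 μ := by
  have hY : MemLp (fun ω => X ω - μ[X]) 3 μ := hX.sub (memLp_const _)
  have hcentered : ∫ ω, (X ω - μ[X]) ∂μ = 0 := by
    simpa [centralMoment_eq_integral] using centralMoment_one (X := X) (μ := μ)
  rw [covariance, ← variance_eq_integral hX.aemeasurable, centralMoment_eq_integral]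
  calc ∫ ω, (X ω - μ[X]) * ((X ω - μ[X]) ^ 2 - Var[X; μ]) ∂μ
      = ∫ ω, ((X ω - μ[X]) ^ 3 - Var[X; μ] * (X ω - μ[X])) ∂μ := by
        congr 1 with ω; ring
    _ = ∫ ω, (X ω - μ[X]) ^ 3 ∂μ := by
        rw [integral_sub (hY.integrable_pow_of_le_s10 (p := 3) le_rfl)
          ((hY.integrable (by norm_num)).const_mul _), integral_const_mul, hcentered,
          mul_zero, sub_zero]

lemma variance_sq_sub_mean (hX : MemLp X 4 μ) :
    Var[fun ω => (X ω - μ[X]) ^ 2; μ] = centralMoment X 4 μ - Var[X; μ] ^ 2 := by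
  have hY : MemLp (fun ω => X ω - μ[X]) 4 μ := hX.sub (memLp_const _)
  have hvar : ∫ ω, (X ω - μ[X]) ^ 2 ∂μ = Var[X; μ] :=
    (variance_eq_integral hX.aemeasurable).symm
  rw [variance_eq_integral (hY.aemeasurable.pow_const 2), hvar, centralMoment_eq_integral]
  calc ∫ ω, ((X ω - μ[X]) ^ 2 - Var[X; μ]) ^ 2 ∂μ
      = ∫ ω, ((X ω - μ[X]) ^ 4 - 2 * Var[X; μ] * (X ω - μ[X]) ^ 2 + Var[X; μ] ^ 2) ∂μ := by
        congr 1 with ω; ring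
    _ = ∫ ω, (X ω - μ[X]) ^ 4 ∂μ - Var[X; μ] ^ 2 := by
        have h4 := hY.integrable_pow_of_le_s10 (p := 4) le_rfl
        have h2 := (hY.integrable_pow_of_le_s10 (p := 4) (k := 2) (by norm_num)).const_mul
          (2 * Var[X; μ])
        rw [integral_add (h4.sub' h2) (integrable_const _), integral_sub h4 h2,
          integral_const_mul, hvar]
        simp only [integral_const, probReal_univ, smul_eq_mul, one_mul]
        ring

theorem sq_centralMoment_three_le (hX : MemLp X 4 μ) :
    centralMoment X 3 μ ^ 2 ≤ Var[X; μ] * (centralMoment X 4 μ - Var[X; μ] ^ 2) := by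
  have hY : MemLp (fun ω => X ω - μ[X]) 4 μ := hX.sub (memLp_const _)
  have hsq : MemLp (fun ω => (X ω - μ[X]) ^ 2) 2 μ := by
    refine (memLp_two_iff_integrable_sq (hY.aestronglyMeasurable.pow 2)).2 ?_
    simpa [← pow_mul] using hY.integrable_pow_of_le_s10 (p := 4) le_rfl
  rw [← covariance_sq_sub_mean (hX.mono_exponent (by norm_num)), ← variance_sq_sub_mean hX]
  exact covariance_sq_le_variance_mul_variance (hX.mono_exponent (by norm_num)) hsq

end

end ProbabilityTheory

lemma abs_div_sqrt_lt_one {a b : ℝ} (h : a ^ 2 < b) : |a / √b| < 1 := by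
  have hb : 0 < √b := Real.sqrt_pos.2 ((sq_nonneg a).trans_lt h)
  rw [abs_div, abs_of_pos hb, div_lt_one hb, Real.lt_sqrt (abs_nonneg a), sq_abs]
  exact h

/-- For a real random variable `X` with `E X⁴ < ∞`, mean `μ`, variance `σ² > 0`, skewness
`γ = μ₃/σ³` and excess kurtosis `κ = μ₄/σ⁴ - 3`, the quantity
`ρ₂ = γ / √(κ + 3 - (n-3)/(n-1))` satisfies `|ρ₂| < 1` for every integer `n ≥ 2`. -/
theorem abs_rho2_lt_one
    {Ω : Type*} [MeasureSpace Ω] [IsProbabilityMeasure (ℙ : Measure Ω)]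
    (X : Ω → ℝ) (μ σ μ3 μ4 γ κ : ℝ)
    (hmeas : Measurable X)
    (hmom : Integrable (fun ω => (X ω) ^ 4) ℙ)
    (hmean : 𝔼[X] = μ)
    (hσ : 0 < σ) (hvar : variance X ℙ = σ ^ 2)
    (hμ3 : (∫ ω, (X ω - μ) ^ 3 ∂ℙ) = μ3)
    (hμ4 : (∫ ω, (X ω - μ) ^ 4 ∂ℙ) = μ4)
    (hγ : γ = μ3 / σ ^ 3) (hκ : κ = μ4 / σ ^ 4 - 3) :
    ∀ n : ℕ, 2 ≤ n →
      |γ / Real.sqrt (κ + 3 - ((n : ℝ) - 3) / ((n : ℝ) - 1))| < 1 := by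
  intro n hn
  have hX : MemLp X 4 ℙ :=
    (memLp_four_iff_integrable_pow_four hmeas.aestronglyMeasurable).2 hmom
  have hpearson : μ3 ^ 2 ≤ σ ^ 2 * (μ4 - (σ ^ 2) ^ 2) := by
    simpa only [centralMoment_eq_integral, hmean, hvar, hμ3, hμ4]
      using sq_centralMoment_three_le hX
  have hskew : γ ^ 2 ≤ κ + 2 := by
    have hκσ : (κ + 2) * σ ^ 6 = σ ^ 2 * (μ4 - (σ ^ 2) ^ 2) := by
      rw [hκ]
      field_simp
      ring
    rw [hγ, div_pow, ← pow_mul, div_le_iff₀ (by positivity), hκσ]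
    exact hpearson
  have hratio : ((n : ℝ) - 3) / ((n : ℝ) - 1) < 1 := by
    have hn' : (2 : ℝ) ≤ n := by exact_mod_cast hn
    rw [div_lt_one (by linarith)]
    linarith
  exact abs_div_sqrt_lt_one (by linarith)
end
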